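/- Let A = F_d* diag(â) F_d be a circular convolution operator on ℓ²(ℤ_d) with kernel a, let λ_1,…,λ_N be the distinct eigenvalues of A, and let P_k be the orthogonal projection onto the eigenspace E_k of diag(â) for λ_k. Let Ω ⊂ ℤ_d, set f_i = F_d e_i, and for each i ∈ Ω let r_i be the degree of the A-annihilator of e_i (the monic polynomial p of smallest degree with p(A)e_i = 0). If for every i ∈ Ω one has l_i ≥ r_i − 1 and for every k the family {P_k f_i : i ∈ Ω} is a frame for E_k, then Y = {e_i, A e_i, …, A^{l_i} e_i : i ∈ Ω} is a frame for ℓ²(ℤ_d). -/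

import Mathlib

open Matrix

/-- Unnormalized discrete Fourier transform of `a : ZMod d → ℂ`. -/
noncomputable def hatKer (d : ℕ) [NeZero d] (a : ZMod d → ℂ) : ZMod d → ℂ :=
  fun j => ∑ k : ZMod d,
    a k * Complex.exp (-(2 * (Real.pi : ℂ) * Complex.I) * ((j.val : ℂ) * (k.val : ℂ)) / (d : ℂ))

/-- The circular convolution operator with kernel `a`, as a matrix. -/
def convMat (d : ℕ) (a : ZMod d → ℂ) : Matrix (ZMod d) (ZMod d) ℂ :=
  Matrix.of fun k i => a (k - i)

/-- The normalized discrete Fourier matrix `F_d`. -/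
noncomputable def FdMat (d : ℕ) : Matrix (ZMod d) (ZMod d) ℂ :=
  Matrix.of fun j k =>
    ((Real.sqrt d : ℝ) : ℂ)⁻¹ *
      Complex.exp (-(2 * (Real.pi : ℂ) * Complex.I) * ((j.val : ℂ) * (k.val : ℂ)) / (d : ℂ))

/-- The degree of the `A`-annihilator of `v`: the smallest degree of a monic
polynomial `p` with `p(A) v = 0`. -/
noncomputable def annihDeg (d : ℕ) [NeZero d] (A : Matrix (ZMod d) (ZMod d) ℂ)
    (v : ZMod d → ℂ) : ℕ :=
  sInf {n : ℕ | ∃ p : Polynomial ℂ, p.Monic ∧ p.natDegree = n ∧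
    (Polynomial.aeval A p) *ᵥ v = 0}

/-!
Conjugating by the Fourier matrix turns `A` into `D = diag(â)` and the generators `A^n e_i`
into `D^n f_i`, so it suffices to show that the vectors `D^n f_i` span. If `p` is the
annihilator of `e_i`, then `p(D) f_i = 0`, so `p` vanishes at every value of `â` on the support
of `f_i`: there are at most `r_i` such values. The Lagrange basis polynomial of `λ` on these
values has degree at most `r_i - 1 ≤ l_i`, and evaluated at `D` it maps `f_i` to its projection
`P_λ f_i`. So every `P_λ f_i` lies in the span of the `D^n f_i`, and by hypothesis these
projections span each eigenspace `E_λ`, hence the whole space.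
-/

open Polynomial Finset ZMod
open scoped ZMod

theorem SemiconjBy.aeval {R M : Type*} [CommSemiring R] [Semiring M] [Algebra R M] {a x y : M}
    (h : SemiconjBy a x y) (p : R[X]) : SemiconjBy a (aeval x p) (aeval y p) := by
  induction p using Polynomial.induction_on' with
  | add p q hp hq => simpa only [map_add] using hp.add_right hq
  | monomial n c =>
    simpa only [aeval_monomial] using
      SemiconjBy.mul_right (Algebra.commute_algebraMap_right c a) (h.pow_right n)

theorem Submodule.eq_top_of_forall_single_mem {R ι : Type*} [Semiring R] [Fintype ι]
    [DecidableEq ι] {p : Submodule R (ι → R)} (h : ∀ t, Pi.single t 1 ∈ p) : p = ⊤ :=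
  eq_top_iff.2 <| (Pi.basisFun R ι).span_eq.ge.trans <|
    Submodule.span_le.2 <| Set.range_subset_iff.2 fun t => by simpa using h t

namespace Matrix

section CommRing

variable {R n ι : Type*} [CommRing R] [Fintype n] [DecidableEq n]

theorem aeval_diagonal (w : n → R) (p : R[X]) :
    aeval (diagonal w) p = diagonal fun t => p.eval (w t) := by
  rw [← diagonalAlgHom_apply (R := R), aeval_algHom_apply, aeval_pi_apply]
  rfl

theorem aeval_mulVec_mem_span_pow (M : Matrix n n R) (v : n → R) {p : R[X]} {m : ℕ}
    (hm : p.natDegree ≤ m) :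
    aeval M p *ᵥ v ∈ Submodule.span R {u | ∃ k ≤ m, u = M ^ k *ᵥ v} := by
  rw [aeval_eq_sum_range, Matrix.sum_mulVec]
  refine Submodule.sum_mem _ fun k hk => ?_
  rw [smul_mulVec]
  exact Submodule.smul_mem _ _ <| Submodule.subset_span
    ⟨k, (Nat.lt_succ_iff.1 (mem_range.1 hk)).trans hm, rfl⟩

theorem span_pow_mulVec_eq_top_of_semiconjBy {F A D : Matrix n n R}
    (hF : Function.Injective F.mulVecLin) (hFA : SemiconjBy F A D) (Ω : Finset ι) (l : ι → ℕ)
    (e : ι → n → R)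
    (hD : Submodule.span R {v | ∃ i ∈ Ω, ∃ k ≤ l i, v = D ^ k *ᵥ (F *ᵥ e i)} = ⊤) :
    Submodule.span R {v | ∃ i ∈ Ω, ∃ k ≤ l i, v = A ^ k *ᵥ e i} = ⊤ := by
  have hmap :
      (Submodule.span R {v | ∃ i ∈ Ω, ∃ k ≤ l i, v = A ^ k *ᵥ e i}).map F.mulVecLin = ⊤ := by
    rw [Submodule.map_span, eq_top_iff, ← hD]
    refine Submodule.span_mono ?_
    rintro _ ⟨i, hi, k, hk, rfl⟩
    refine ⟨A ^ k *ᵥ e i, ⟨i, hi, k, hk, rfl⟩, ?_⟩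
    rw [mulVecLin_apply, mulVec_mulVec, (hFA.pow_right k).eq, ← mulVec_mulVec]
  exact (Submodule.comap_map_eq_of_injective hF _).symm.trans (by rw [hmap, Submodule.comap_top])

end CommRing

section Field

variable {K n : Type*} [Field K] [Fintype n] [DecidableEq n] [DecidableEq K]

theorem card_image_support_le_natDegree {w g : n → K} {p : K[X]} (hp : p ≠ 0)
    (hpg : aeval (diagonal w) p *ᵥ g = 0) :
    #((univ.filter (g · ≠ 0)).image w) ≤ p.natDegree := by
  refine card_le_degree_of_subset_roots fun μ hμ => ?_
  obtain ⟨t, ht, rfl⟩ := mem_image.1 hμ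
  have hpt := congrFun hpg t
  rw [aeval_diagonal, mulVec_diagonal] at hpt
  exact (mem_roots hp).2 ((mul_eq_zero.1 hpt).resolve_right (mem_filter.1 ht).2)

theorem indicator_mem_span_diagonal_pow_mulVec (w g : n → K) {p : K[X]} (hp : p ≠ 0)
    (hpg : aeval (diagonal w) p *ᵥ g = 0) (lam : K) {m : ℕ} (hm : p.natDegree - 1 ≤ m) :
    {t | w t = lam}.indicator g ∈ Submodule.span K {u | ∃ k ≤ m, u = diagonal w ^ k *ᵥ g} := by
  set S := (univ.filter (g · ≠ 0)).image w
  have hS : ∀ t, g t ≠ 0 → w t ∈ S := fun t ht => mem_image_of_mem w (by simpa using ht)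
  by_cases hlam : lam ∉ S
  · convert Submodule.zero_mem _
    ext t
    by_cases ht : g t = 0
    · simp [ht]
    · exact Set.indicator_of_notMem (s := {t | w t = lam}) (fun hwt => hlam (hwt ▸ hS t ht)) g
  rw [not_not] at hlam
  set q := Lagrange.basis S id lam
  have hq_self : q.eval lam = 1 := Lagrange.eval_basis_self (v := id) (Set.injOn_id _) hlam
  have hq_ne : ∀ μ ∈ S, μ ≠ lam → q.eval μ = 0 := fun μ hμ hne =>
    Lagrange.eval_basis_of_ne (v := id) hne.symm hμ
  have hq : aeval (diagonal w) q *ᵥ g = {t | w t = lam}.indicator g := by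
    ext t
    rw [aeval_diagonal, mulVec_diagonal]
    by_cases ht : g t = 0
    · simp [ht, Set.indicator_apply]
    by_cases hwt : w t = lam
    · rw [Set.indicator_of_mem (s := {t | w t = lam}) hwt, hwt, hq_self, one_mul]
    · rw [Set.indicator_of_notMem (s := {t | w t = lam}) hwt, hq_ne _ (hS t ht) hwt, zero_mul]
  rw [← hq]
  refine aeval_mulVec_mem_span_pow _ _ (le_trans ?_ hm)
  rw [Lagrange.natDegree_basis (Set.injOn_id _) hlam]
  exact Nat.sub_le_sub_right (card_image_support_le_natDegree hp hpg) 1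

end Field

end Matrix

section Fourier

variable (d : ℕ) [NeZero d]

theorem exp_eq_stdAddChar (j k : ZMod d) :
    Complex.exp (-(2 * (Real.pi : ℂ) * Complex.I) * ((j.val : ℂ) * (k.val : ℂ)) / (d : ℂ)) =
      stdAddChar (-(j * k)) := by
  rw [show -(j * k) = ((-(j.val * k.val : ℤ) : ℤ) : ZMod d) by push_cast; simp, stdAddChar_coe]
  congr 1
  push_cast
  ring

theorem hatKer_eq_dft (a : ZMod d → ℂ) : hatKer d a = 𝓕 a := by
  ext j
  simp only [hatKer, dft_apply, exp_eq_stdAddChar, smul_eq_mul, mul_comm j, mul_comm (a _)]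

theorem FdMat_mulVec (v : ZMod d → ℂ) :
    FdMat d *ᵥ v = ((Real.sqrt d : ℝ) : ℂ)⁻¹ • 𝓕 v := by
  ext j
  simp only [FdMat, mulVec, dotProduct, of_apply, exp_eq_stdAddChar]
  simp only [Pi.smul_apply, dft_apply, smul_eq_mul, Finset.mul_sum, mul_assoc, mul_comm j]

theorem FdMat_mulVecLin_injective : Function.Injective (FdMat d).mulVecLin := by
  intro x y h
  simp only [mulVecLin_apply, FdMat_mulVec] at h
  refine dft.injective (smul_right_injective _ ?_ h)
  simp [NeZero.ne d]

theorem dft_convMat_mulVec (a v : ZMod d → ℂ) : 𝓕 (convMat d a *ᵥ v) = 𝓕 a * 𝓕 v := by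
  ext j
  simp only [dft_apply, Pi.mul_apply, smul_eq_mul, convMat, mulVec, dotProduct, of_apply,
    Finset.mul_sum, Finset.sum_mul]
  rw [Finset.sum_comm]
  refine Finset.sum_congr rfl fun i _ => Fintype.sum_equiv (Equiv.subRight i) _ _ fun k => ?_
  rw [Equiv.subRight_apply, show -(k * j) = -((k - i) * j) + -(i * j) by ring,
    AddChar.map_add_eq_mul]
  ring

theorem FdMat_mul_convMat (a : ZMod d → ℂ) :
    FdMat d * convMat d a = diagonal (hatKer d a) * FdMat d := by
  refine ext_iff_mulVec.2 fun v => funext fun j => ?_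
  rw [← mulVec_mulVec, ← mulVec_mulVec, FdMat_mulVec, FdMat_mulVec, dft_convMat_mulVec,
    mulVec_diagonal, hatKer_eq_dft]
  simp only [Pi.smul_apply, Pi.mul_apply, smul_eq_mul]
  ring

theorem exists_monic_natDegree_eq_annihDeg (A : Matrix (ZMod d) (ZMod d) ℂ) (v : ZMod d → ℂ) :
    ∃ p : ℂ[X], p.Monic ∧ p.natDegree = annihDeg d A v ∧ aeval A p *ᵥ v = 0 := by
  have hne : {n | ∃ p : ℂ[X], p.Monic ∧ p.natDegree = n ∧ aeval A p *ᵥ v = 0}.Nonempty :=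
    ⟨_, A.charpoly, A.charpoly_monic, rfl, by rw [aeval_self_charpoly, zero_mulVec]⟩
  exact Nat.sInf_mem hne

end Fourier

/-- if `l i ≥ r_i - 1`, where `r_i` is the degree of the `A`-annihilator of
`e_i`, and for every eigenvalue `λ` of `diag(â)` the projections of the Fourier vectors
`f_i = F_d e_i` onto the eigenspace `E_λ = span{e_t : â t = λ}` span that eigenspace,
then `Y = {A^n e_i : i ∈ Ω, n ≤ l i}` is a frame for `ℓ²(ℤ_d)`. -/
theorem stmt1 (d : ℕ) [NeZero d] (a : ZMod d → ℂ) (Ω : Finset (ZMod d)) (l : ZMod d → ℕ)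
    (hl : ∀ i ∈ Ω, annihDeg d (convMat d a) (Pi.single i 1) - 1 ≤ l i)
    (hproj : ∀ lam ∈ Set.range (hatKer d a),
      Submodule.span ℂ {v : ZMod d → ℂ | ∃ i ∈ Ω,
          v = Set.indicator {t : ZMod d | hatKer d a t = lam}
                (FdMat d *ᵥ (Pi.single i 1 : ZMod d → ℂ))}
        = Submodule.span ℂ {v : ZMod d → ℂ | ∃ t : ZMod d,
            hatKer d a t = lam ∧ v = (Pi.single t 1 : ZMod d → ℂ)}) :
    Submodule.span ℂ {v : ZMod d → ℂ | ∃ i ∈ Ω, ∃ n ≤ l i,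
        v = (convMat d a) ^ n *ᵥ (Pi.single i 1 : ZMod d → ℂ)} = ⊤ := by
  set F := FdMat d
  set w := hatKer d a
  have hFA : SemiconjBy F (convMat d a) (diagonal w) := FdMat_mul_convMat d a
  set T : Set (ZMod d → ℂ) := {v | ∃ i ∈ Ω, ∃ n ≤ l i, v = diagonal w ^ n *ᵥ (F *ᵥ Pi.single i 1)}
  have hind : ∀ lam, ∀ i ∈ Ω, {t | w t = lam}.indicator (F *ᵥ Pi.single i 1) ∈
      Submodule.span ℂ T := by
    intro lam i hi
    obtain ⟨p, hmon, hdeg, hp⟩ := exists_monic_natDegree_eq_annihDeg d _ (Pi.single i 1)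
    have hpF : aeval (diagonal w) p *ᵥ (F *ᵥ Pi.single i 1) = 0 := by
      rw [mulVec_mulVec, ← (hFA.aeval p).eq, ← mulVec_mulVec, hp, mulVec_zero]
    refine Submodule.span_mono ?_
      (indicator_mem_span_diagonal_pow_mulVec w _ hmon.ne_zero hpF lam (hdeg ▸ hl i hi))
    rintro _ ⟨n, hn, rfl⟩
    exact ⟨i, hi, n, hn, rfl⟩
  refine span_pow_mulVec_eq_top_of_semiconjBy (FdMat_mulVecLin_injective d) hFA Ω l _ <|
    Submodule.eq_top_of_forall_single_mem fun t => ?_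
  refine Submodule.span_le.2 ?_ ((hproj (w t) ⟨t, rfl⟩).ge (Submodule.subset_span ⟨t, rfl, rfl⟩))
  rintro _ ⟨i, hi, rfl⟩
  exact hind _ i hi
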